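/- arXiv:2502.15061 — 6 statements merged into one kernel-verified Lean document; each statement's English description precedes it below -/
import Mathlib

section
/- Let V = W × D be a direct product of finite-dimensional real vector spaces, let θ be the pullback to V under the projection V → W of a volume form on W (a nonzero exterior form of top degree dim W), and let ζ be the pullback to V under the projection V → D of an indivisible exterior form on D. Then the divisibility space of the exterior form μ = θ ∧ ζ on V equals {0} × D. -/
/-!
Write a functional on `W × U` as `ξ = φ ∘ fst + η ∘ snd`. The `φ`-part always divides `θ ∧ ζ`,
because `φ ∧ θ₀` has degree `dim W + 1` on `W`. For the `η`-part, contract `η ∧ θ ∧ ζ`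
successively with `(b₁, 0), …, (bₙ, 0)` for a basis `b` of `W`: these vectors annihilate every
form pulled back from `U`, and `θ₀` is a top form, i.e. `c • b₁* ∧ ⋯ ∧ bₙ*` with `c ≠ 0`, so the
result is `± c • η ∧ ζ`. Hence `η` divides `θ ∧ ζ` only if it divides `ζ₀`, i.e. only if `η = 0`.
The dividing functionals are therefore exactly those pulled back from `W`, and their common kernel
is `{0} × U`.
-/

set_option synthInstance.maxHeartbeats 1000000
set_option maxHeartbeats 1000000

open ExteriorAlgebra in
/-- The subspace of functionals `ξ ∈ V*` dividing `μ`, i.e. with `ξ ∧ μ = 0`. -/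
noncomputable def divForms (V : Type*) [AddCommGroup V] [Module ℝ V]
    (μ : ExteriorAlgebra ℝ (Module.Dual ℝ V)) : Submodule ℝ (Module.Dual ℝ V) :=
  LinearMap.ker ((LinearMap.mulRight ℝ μ).comp (ExteriorAlgebra.ι ℝ))

/-- The divisibility space of `μ`: all `v ∈ V` annihilated by every functional `ξ`
with `ξ ∧ μ = 0`. -/
noncomputable def divSpace (V : Type*) [AddCommGroup V] [Module ℝ V]
    (μ : ExteriorAlgebra ℝ (Module.Dual ℝ V)) : Submodule ℝ V :=
  (divForms V μ).dualCoannihilator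

namespace ExteriorAlgebra

open CliffordAlgebra (contractLeft contractLeft_ι_mul)

section CommRing

variable {R M N : Type*} [CommRing R] [AddCommGroup M] [Module R M] [AddCommGroup N] [Module R N]

theorem contractLeft_mul_of_contractLeft_eq_zero {d : Module.Dual R M}
    {y : ExteriorAlgebra R M} (hy : contractLeft d y = 0) (x : ExteriorAlgebra R M) :
    contractLeft d (x * y) = contractLeft d x * y := by
  induction x using CliffordAlgebra.left_induction with
  | algebraMap r =>
    rw [CliffordAlgebra.contractLeft_algebraMap_mul, hy, CliffordAlgebra.contractLeft_algebraMap,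
      mul_zero, zero_mul]
  | add x x' hx hx' => rw [add_mul, map_add, map_add, hx, hx', add_mul]
  | ι_mul m x hx =>
    rw [mul_assoc, contractLeft_ι_mul, contractLeft_ι_mul, hx, sub_mul, smul_mul_assoc, mul_assoc]

theorem contractLeft_map_eq_zero {f : N →ₗ[R] M} {d : Module.Dual R M} (hd : d ∘ₗ f = 0)
    (x : ExteriorAlgebra R N) : contractLeft d (map f x) = 0 := by
  induction x using CliffordAlgebra.left_induction with
  | algebraMap r => rw [AlgHom.commutes, CliffordAlgebra.contractLeft_algebraMap]
  | add x x' hx hx' => rw [map_add, map_add, hx, hx', add_zero]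
  | ι_mul m x hx =>
    rw [map_mul, map_apply_ι, contractLeft_ι_mul, hx, ← LinearMap.comp_apply, hd,
      LinearMap.zero_apply, zero_smul, mul_zero, sub_zero]

theorem contractLeft_ιMulti_eq_zero {d : Module.Dual R M} {n : ℕ} {φ : Fin n → M}
    (h : ∀ i, d (φ i) = 0) : contractLeft d (ιMulti R n φ) = 0 := by
  induction n with
  | zero => rw [ιMulti_zero_apply, CliffordAlgebra.contractLeft_one]
  | succ n ih =>
    rw [ιMulti_succ_apply, contractLeft_ι_mul, h 0, ih (φ := Matrix.vecTail φ) fun i => h i.succ,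
      zero_smul, mul_zero, sub_zero]

def contractLeftTuple :
    {m : ℕ} → (Fin m → Module.Dual R M) → ExteriorAlgebra R M →ₗ[R] ExteriorAlgebra R M
  | 0, _ => LinearMap.id
  | _ + 1, D => contractLeftTuple (Matrix.vecTail D) ∘ₗ contractLeft (D 0)

theorem contractLeftTuple_succ {m : ℕ} (D : Fin (m + 1) → Module.Dual R M)
    (x : ExteriorAlgebra R M) :
    contractLeftTuple D x = contractLeftTuple (Matrix.vecTail D) (contractLeft (D 0) x) :=
  rfl

theorem contractLeftTuple_mul_of_contractLeft_eq_zero {m : ℕ} {D : Fin m → Module.Dual R M}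
    {y : ExteriorAlgebra R M} (hy : ∀ i, contractLeft (D i) y = 0) (x : ExteriorAlgebra R M) :
    contractLeftTuple D (x * y) = contractLeftTuple D x * y := by
  induction m generalizing x with
  | zero => rfl
  | succ m ih =>
    rw [contractLeftTuple_succ, contractLeftTuple_succ,
      contractLeft_mul_of_contractLeft_eq_zero (hy 0),
      ih (D := Matrix.vecTail D) fun i => hy i.succ]

theorem contractLeftTuple_ι_mul {m : ℕ} {D : Fin m → Module.Dual R M} {p : M}
    (hp : ∀ i, D i p = 0) (x : ExteriorAlgebra R M) :
    contractLeftTuple D (ι R p * x) = (-1 : R) ^ m • (ι R p * contractLeftTuple D x) := by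
  induction m generalizing x with
  | zero => rw [pow_zero, one_smul]; rfl
  | succ m ih =>
    rw [contractLeftTuple_succ, contractLeftTuple_succ, contractLeft_ι_mul, hp 0, zero_smul,
      zero_sub, map_neg, ih (D := Matrix.vecTail D) fun i => hp i.succ, pow_succ, mul_neg_one,
      neg_smul]

theorem contractLeftTuple_ιMulti {n : ℕ} {D : Fin n → Module.Dual R M} {φ : Fin n → M}
    (h : ∀ i j, D i (φ j) = if i = j then 1 else 0) :
    contractLeftTuple D (ιMulti R n φ) = 1 := by
  induction n with
  | zero => rw [ιMulti_zero_apply]; rfl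
  | succ n ih =>
    have hD0 : ∀ i, D 0 (Matrix.vecTail φ i) = 0 := fun i => by
      simp [Matrix.vecTail, h, (Fin.succ_ne_zero i).symm]
    rw [contractLeftTuple_succ, ιMulti_succ_apply, contractLeft_ι_mul, h 0 0, if_pos rfl,
      one_smul, contractLeft_ιMulti_eq_zero hD0, mul_zero, sub_zero]
    exact ih fun i j => by simp [Matrix.vecTail, h, Fin.succ_inj]

end CommRing

section Field

variable {K M : Type*} [Field K] [AddCommGroup M] [Module K M] [FiniteDimensional K M]

theorem exteriorPower_eq_bot_of_finrank_lt {k : ℕ} (hk : Module.finrank K M < k) :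
    ⋀[K]^k M = ⊥ := by
  rw [← Submodule.finrank_eq_zero, exteriorPower.finrank_eq, Nat.choose_eq_zero_of_lt hk]

theorem ι_mul_eq_zero_of_mem_exteriorPower_finrank {x : ExteriorAlgebra K M}
    (hx : x ∈ ⋀[K]^(Module.finrank K M) M) (m : M) : ι K m * x = 0 := by
  have hmx : ι K m * x ∈ ⋀[K]^(1 + Module.finrank K M) M :=
    SetLike.mul_mem_graded (by simp only [pow_one, LinearMap.mem_range_self]) hx
  rwa [exteriorPower_eq_bot_of_finrank_lt (by omega), Submodule.mem_bot] at hmx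

theorem exists_eq_smul_ιMulti_of_mem_exteriorPower {n : ℕ} (b : Module.Basis (Fin n) K M)
    {x : ExteriorAlgebra K M} (hx : x ∈ ⋀[K]^n M) : ∃ c : K, x = c • ιMulti K n b := by
  have hvol : ιMulti K n b ≠ 0 := fun h0 => by
    have := contractLeftTuple_ιMulti (D := b.coord) (φ := b) fun i j => by
      simp [Module.Basis.coord_apply, Finsupp.single_apply, eq_comm]
    rw [h0, map_zero] at this
    exact zero_ne_one this
  have hrank : Module.finrank K (⋀[K]^n M) = 1 := by
    rw [exteriorPower.finrank_eq, Module.finrank_eq_card_basis b, Fintype.card_fin,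
      Nat.choose_self]
  obtain ⟨c, hc⟩ := (finrank_eq_one_iff_of_nonzero'
    (⟨_, ιMulti_range K n ⟨b, rfl⟩⟩ : ⋀[K]^n M) (by simpa using hvol)).mp hrank ⟨x, hx⟩
  exact ⟨c, (congrArg Subtype.val hc).symm⟩

end Field

section Prod

variable {K W U : Type*} [Field K] [AddCommGroup W] [Module K W] [FiniteDimensional K W]
  [AddCommGroup U] [Module K U]

theorem ι_dualMap_fst_mul_eq_zero {θ : ExteriorAlgebra K (Module.Dual K W)}
    (hθ : θ ∈ ⋀[K]^(Module.finrank K W) (Module.Dual K W)) (φ : Module.Dual K W)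
    (y : ExteriorAlgebra K (Module.Dual K (W × U))) :
    ι K ((LinearMap.fst K W U).dualMap φ) * (map (LinearMap.fst K W U).dualMap θ * y) = 0 := by
  rw [← Subspace.dual_finrank_eq] at hθ
  rw [← mul_assoc, ← map_apply_ι, ← map_mul, ι_mul_eq_zero_of_mem_exteriorPower_finrank hθ,
    map_zero, zero_mul]

theorem ι_mul_eq_zero_of_ι_dualMap_snd_mul_eq_zero {θ : ExteriorAlgebra K (Module.Dual K W)}
    (hθ : θ ∈ ⋀[K]^(Module.finrank K W) (Module.Dual K W)) (hθ0 : θ ≠ 0)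
    {ζ : ExteriorAlgebra K (Module.Dual K U)} {η : Module.Dual K U}
    (h : ι K ((LinearMap.snd K W U).dualMap η) *
      (map (LinearMap.fst K W U).dualMap θ * map (LinearMap.snd K W U).dualMap ζ) = 0) :
    ι K η * ζ = 0 := by
  set f := (LinearMap.fst K W U).dualMap
  set g := (LinearMap.snd K W U).dualMap
  set n := Module.finrank K W
  let b := Module.finBasis K W
  obtain ⟨c, rfl⟩ := exists_eq_smul_ιMulti_of_mem_exteriorPower b.dualBasis hθ
  have hc : c ≠ 0 := fun hc => hθ0 (by rw [hc, zero_smul])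
  let D : Fin n → Module.Dual K (Module.Dual K (W × U)) :=
    fun i => Module.Dual.eval K (W × U) (b i, 0)
  have hDf : contractLeftTuple D (map f (ιMulti K n b.dualBasis)) = 1 := by
    rw [map_apply_ιMulti]
    exact contractLeftTuple_ιMulti fun i j => by simp [D, f, Finsupp.single_apply]
  have hDg : ∀ i, contractLeft (D i) (map g ζ) = 0 := fun i =>
    contractLeft_map_eq_zero (by ext; simp [D, g]) ζ
  apply_fun contractLeftTuple D at h
  rw [contractLeftTuple_ι_mul (fun i => by simp [D, g]),
    contractLeftTuple_mul_of_contractLeft_eq_zero hDg, map_smul, map_smul, hDf, map_zero,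
    smul_mul_assoc, one_mul, mul_smul_comm, smul_smul, smul_eq_zero] at h
  have hgζ : map g (ι K η * ζ) = 0 := by
    rw [map_mul, map_apply_ι]
    exact h.resolve_left (mul_ne_zero (pow_ne_zero _ (neg_ne_zero.mpr one_ne_zero)) hc)
  refine map_injective ⟨(LinearMap.inr K W U).dualMap, ?_⟩ (hgζ.trans (map_zero _).symm)
  ext η' u
  simp [g]

end Prod

end ExteriorAlgebra

open ExteriorAlgebra in
theorem mem_divForms {V : Type*} [AddCommGroup V] [Module ℝ V]
    {μ : ExteriorAlgebra ℝ (Module.Dual ℝ V)} {ξ : Module.Dual ℝ V} :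
    ξ ∈ divForms V μ ↔ ι ℝ ξ * μ = 0 :=
  Iff.rfl

open ExteriorAlgebra LinearMap in
theorem divForms_map_fst_mul_map_snd {W U : Type*} [AddCommGroup W] [Module ℝ W]
    [FiniteDimensional ℝ W] [AddCommGroup U] [Module ℝ U]
    {θ : ExteriorAlgebra ℝ (Module.Dual ℝ W)}
    (hθ : θ ∈ ⋀[ℝ]^(Module.finrank ℝ W) (Module.Dual ℝ W)) (hθ0 : θ ≠ 0)
    {ζ : ExteriorAlgebra ℝ (Module.Dual ℝ U)}
    (hζ : ∀ η : Module.Dual ℝ U, η ≠ 0 → ι ℝ η * ζ ≠ 0) :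
    divForms (W × U) (map (fst ℝ W U).dualMap θ * map (snd ℝ W U).dualMap ζ) =
      range (fst ℝ W U).dualMap := by
  refine le_antisymm (fun ξ hξ => ?_) ?_
  · have hξ_eq :
        ξ = (fst ℝ W U).dualMap (ξ ∘ₗ inl ℝ W U) + (snd ℝ W U).dualMap (ξ ∘ₗ inr ℝ W U) := by
      ext <;> simp <;> exact map_zero ξ
    rw [mem_divForms, hξ_eq, map_add, add_mul, ι_dualMap_fst_mul_eq_zero hθ, zero_add] at hξ
    have hη : ξ ∘ₗ inr ℝ W U = 0 := by
      by_contra hne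
      exact hζ _ hne (ι_mul_eq_zero_of_ι_dualMap_snd_mul_eq_zero hθ hθ0 hξ)
    rw [hη, map_zero, add_zero] at hξ_eq
    exact ⟨_, hξ_eq.symm⟩
  · rintro _ ⟨φ, rfl⟩
    exact ι_dualMap_fst_mul_eq_zero hθ φ _

theorem stmt1_general (W U : Type*) [AddCommGroup W] [Module ℝ W] [FiniteDimensional ℝ W]
    [AddCommGroup U] [Module ℝ U]
    (θ₀ : ExteriorAlgebra ℝ (Module.Dual ℝ W))
    (hθdeg : θ₀ ∈ ⋀[ℝ]^(Module.finrank ℝ W) (Module.Dual ℝ W))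
    (hθ0 : θ₀ ≠ 0)
    (ζ₀ : ExteriorAlgebra ℝ (Module.Dual ℝ U))
    (hζind : ∀ η : Module.Dual ℝ U, η ≠ 0 → ExteriorAlgebra.ι ℝ η * ζ₀ ≠ 0) :
    divSpace (W × U)
        ((ExteriorAlgebra.map (LinearMap.fst ℝ W U).dualMap) θ₀ *
          (ExteriorAlgebra.map (LinearMap.snd ℝ W U).dualMap) ζ₀)
      = (⊥ : Submodule ℝ W).prod (⊤ : Submodule ℝ U) := by
  rw [divSpace, divForms_map_fst_mul_map_snd hθdeg hθ0 hζind,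
    LinearMap.dualCoannihilator_range_eq_ker_flip]
  ext ⟨w, u⟩
  simp [LinearMap.ext_iff, Module.forall_dual_apply_eq_zero_iff]

/-- For `V = W × U`, if `θ` is the pullback to `V` of a volume form on `W`
(a nonzero form of top degree `dim W`) and `ζ` is the pullback to `V` of an indivisible
exterior form on `U`, then the divisibility space of `μ = θ ∧ ζ` is `{0} × U`. -/
theorem stmt1 (W U : Type*) [AddCommGroup W] [Module ℝ W] [FiniteDimensional ℝ W]
    [AddCommGroup U] [Module ℝ U] [FiniteDimensional ℝ U]
    (θ₀ : ExteriorAlgebra ℝ (Module.Dual ℝ W))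
    (hθdeg : θ₀ ∈ ⋀[ℝ]^(Module.finrank ℝ W) (Module.Dual ℝ W))
    (hθ0 : θ₀ ≠ 0)
    (r : ℕ) (ζ₀ : ExteriorAlgebra ℝ (Module.Dual ℝ U))
    (hζdeg : ζ₀ ∈ ⋀[ℝ]^r (Module.Dual ℝ U))
    (hζind : ∀ η : Module.Dual ℝ U, η ≠ 0 → ExteriorAlgebra.ι ℝ η * ζ₀ ≠ 0) :
    divSpace (W × U)
        ((ExteriorAlgebra.map (LinearMap.fst ℝ W U).dualMap) θ₀ *
          (ExteriorAlgebra.map (LinearMap.snd ℝ W U).dualMap) ζ₀)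
      = (⊥ : Submodule ℝ W).prod (⊤ : Submodule ℝ U) :=
  stmt1_general W U θ₀ hθdeg hθ0 ζ₀ hζind
end

section
/- Let V be a six-dimensional real vector space, let ξ¹, …, ξ⁶ be a basis of V*, and let μ = ξ¹ ∧ ξ² ∧ ξ³ + ξ³ ∧ ξ⁴ ∧ ξ⁵ + ξ⁵ ∧ ξ⁶ ∧ ξ¹. Then the set H′ of all ξ ∈ V* for which the 4-form ξ ∧ μ is decomposable (i.e., equals η¹ ∧ η² ∧ η³ ∧ η⁴ for some η¹, …, η⁴ ∈ V*) is exactly the linear span of ξ¹, ξ³, ξ⁵. -/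
/-!
If `ω = η₁ ∧ η₂ ∧ η₃ ∧ η₄`, every double contraction `f ⌋ g ⌋ ω` is a combination of products
`ηᵢ ∧ ηⱼ`, so `(f ⌋ g ⌋ ω) ∧ ω = 0`, a Plücker relation. For `ω = ξ ∧ μ` and `f, g` the dual
coordinates `1` and `4`, the top coefficient of this 6-form is `-2 ξ₁²`, which forces `ξ₁ = 0`.
Since `μ` is invariant under the index shift `i ↦ i + 2`, also `ξ₃ = ξ₅ = 0`. Conversely, for
`ξ = x e₀ + y e₂ + z e₄` one has `ξ ∧ μ = (x e₃ + y e₅ + z e₁) ∧ e₀ ∧ e₂ ∧ e₄`.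
-/

namespace ExteriorAlgebra

variable {R M : Type*} [CommRing R] [AddCommGroup M] [Module R M]

local infixl:70 "⌋" => CliffordAlgebra.contractLeft (Q := (0 : QuadraticForm R M))

theorem contractLeft_mem_pow (W : Submodule R M) (f : Module.Dual R M) (k : ℕ)
    {x : ExteriorAlgebra R M} (hx : x ∈ W.map (ι R) ^ (k + 1)) :
    f⌋x ∈ W.map (ι R) ^ k := by
  induction k generalizing x with
  | zero =>
    rw [zero_add, pow_one] at hx
    obtain ⟨w, -, rfl⟩ := hx
    exact CliffordAlgebra.contractLeft_ι (Q := 0) f w ▸ Submodule.algebraMap_mem (f w)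
  | succ k ih =>
    rw [pow_succ'] at hx
    induction hx using Submodule.mul_induction_on' with
    | mem_mul_mem m hm y hy =>
      obtain ⟨w, hw, rfl⟩ := hm
      rw [CliffordAlgebra.contractLeft_ι_mul, pow_succ']
      exact sub_mem (Submodule.smul_mem _ _ (pow_succ' (W.map (ι R)) k ▸ hy))
        (Submodule.mul_mem_mul ⟨w, hw, rfl⟩ (ih hy))
    | add y _ z _ hy hz => simpa only [map_add] using add_mem hy hz

theorem mul_eq_zero_of_mem_pow {W : Submodule R M} {ω : ExteriorAlgebra R M}
    (hω : ∀ w ∈ W, ι R w * ω = 0) {k : ℕ} {x : ExteriorAlgebra R M}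
    (hx : x ∈ W.map (ι R) ^ (k + 1)) : x * ω = 0 := by
  rw [pow_succ] at hx
  induction hx using Submodule.mul_induction_on' with
  | mem_mul_mem y _ m hm =>
    obtain ⟨w, hw, rfl⟩ := hm
    rw [mul_assoc, hω w hw, mul_zero]
  | add y _ z _ hy hz => rw [add_mul, hy, hz, zero_add]

theorem ι_mul_ιMulti_eq_zero {n : ℕ} (v : Fin n → M) {w : M}
    (hw : w ∈ Submodule.span R (Set.range v)) : ι R w * ιMulti R n v = 0 := by
  induction hw using Submodule.span_induction with
  | mem _ h =>
    obtain ⟨i, rfl⟩ := h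
    exact ι_mul_prod_list v i
  | zero => rw [map_zero, zero_mul]
  | add _ _ _ _ h₁ h₂ => rw [map_add, add_mul, h₁, h₂, add_zero]
  | smul r _ _ h => rw [map_smul, smul_mul_assoc, h, smul_zero]

theorem ιMulti_mem_pow {n : ℕ} (v : Fin n → M) :
    ιMulti R n v ∈ (Submodule.span R (Set.range v)).map (ι R) ^ n := by
  rw [ιMulti_apply]
  apply Submodule.pow_subset_pow
  rw [Set.mem_pow]
  exact ⟨fun i => ⟨ι R (v i), v i, Submodule.subset_span ⟨i, rfl⟩, rfl⟩, rfl⟩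

theorem contractLeft_contractLeft_ιMulti_mul_ιMulti {n : ℕ} (v : Fin (n + 3) → M)
    (f g : Module.Dual R M) : (f⌋(g⌋ιMulti R (n + 3) v)) * ιMulti R (n + 3) v = 0 :=
  mul_eq_zero_of_mem_pow (fun _ => ι_mul_ιMulti_eq_zero v)
    (contractLeft_mem_pow _ f _ (contractLeft_mem_pow _ g _ (ιMulti_mem_pow v)))

theorem ι_mul_ι_swap (a b : M) : ι R a * ι R b = -(ι R b * ι R a) :=
  eq_neg_of_add_eq_zero_left (ι_add_mul_swap a b)

theorem ι_mul_ι_mul_ι_rotate (a b c : M) :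
    ι R a * ι R b * ι R c = ι R b * ι R c * ι R a := by
  rw [ι_mul_ι_swap a b, neg_mul, mul_assoc, ι_mul_ι_swap a c, mul_neg, neg_neg, mul_assoc]

variable (R) in
def cyclicThreeForm (e : Fin 6 → M) : ExteriorAlgebra R M :=
  ι R (e 0) * ι R (e 1) * ι R (e 2) + ι R (e 2) * ι R (e 3) * ι R (e 4)
    + ι R (e 4) * ι R (e 5) * ι R (e 0)

theorem cyclicThreeForm_comp_add_two (e : Fin 6 → M) :
    cyclicThreeForm R (e ∘ (· + 2)) = cyclicThreeForm R e := by
  simp only [cyclicThreeForm, Function.comp_apply, Fin.reduceAdd]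
  abel

theorem ι_mul_cyclicThreeForm (e : Fin 6 → M) :
    ι R (e 0) * cyclicThreeForm R e = ι R (e 3) * (ι R (e 0) * ι R (e 2) * ι R (e 4)) := by
  have h₁ : ι R (e 0) * (ι R (e 0) * ι R (e 1) * ι R (e 2)) = 0 := by
    rw [← mul_assoc, ← mul_assoc, ι_sq_zero, zero_mul, zero_mul]
  have h₂ : ι R (e 0) * (ι R (e 2) * ι R (e 3) * ι R (e 4)) =
      ι R (e 3) * (ι R (e 0) * ι R (e 2) * ι R (e 4)) := by
    rw [← mul_assoc, ← mul_assoc, ← ι_mul_ι_mul_ι_rotate (e 3)]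
    simp only [mul_assoc]
  have h₃ : ι R (e 0) * (ι R (e 4) * ι R (e 5) * ι R (e 0)) = 0 := by
    rw [← ι_mul_ι_mul_ι_rotate (e 0), ← mul_assoc, ← mul_assoc, ι_sq_zero, zero_mul, zero_mul]
  rw [cyclicThreeForm, mul_add, mul_add, h₁, h₂, h₃, zero_add, add_zero]

theorem exists_ι_mul_cyclicThreeForm_eq_ιMulti_of_mem_span (e : Fin 6 → M) {ξ : M}
    (hξ : ξ ∈ Submodule.span R {e 0, e 2, e 4}) :
    ∃ η : Fin 4 → M, ι R ξ * cyclicThreeForm R e = ιMulti R 4 η := by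
  obtain ⟨x, y, z, rfl⟩ := Submodule.mem_span_triple.mp hξ
  have h₂ := ι_mul_cyclicThreeForm (R := R) (e ∘ (· + 2))
  have h₄ := ι_mul_cyclicThreeForm (R := R) ((e ∘ (· + 2)) ∘ (· + 2))
  rw [cyclicThreeForm_comp_add_two] at h₂
  rw [cyclicThreeForm_comp_add_two, cyclicThreeForm_comp_add_two] at h₄
  simp only [Function.comp_apply, Fin.reduceAdd] at h₂ h₄
  rw [← ι_mul_ι_mul_ι_rotate] at h₂
  rw [ι_mul_ι_mul_ι_rotate (e 4)] at h₄
  refine ⟨![x • e 3 + y • e 5 + z • e 1, e 0, e 2, e 4], ?_⟩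
  calc ι R (x • e 0 + y • e 2 + z • e 4) * cyclicThreeForm R e
      = ι R (x • e 3 + y • e 5 + z • e 1) * (ι R (e 0) * ι R (e 2) * ι R (e 4)) := by
        simp only [map_add, map_smul, add_mul, smul_mul_assoc, ι_mul_cyclicThreeForm, h₂, h₄]
    _ = ιMulti R 4 ![x • e 3 + y • e 5 + z • e 1, e 0, e 2, e 4] := by
        simp [ιMulti_apply, mul_assoc]

section Basis

variable (e : Module.Basis (Fin 6) R M)

variable (R) in
/-- The coefficient of `e 1 ∧ e 2 ∧ e 3 ∧ e 4 ∧ e 5 ∧ e 0`. -/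
noncomputable def topCoeff (u : ExteriorAlgebra R M) : R :=
  algebraMapInv (e.coord 0⌋(e.coord 5⌋(e.coord 4⌋(e.coord 3⌋(e.coord 2⌋(e.coord 1⌋u))))))

theorem contractLeft_contractLeft_ι_mul_cyclicThreeForm (ξ : M) :
    e.coord 1⌋(e.coord 4⌋(ι R ξ * cyclicThreeForm R e)) =
      -(e.repr ξ 4 • (ι R (e 0) * ι R (e 2)))
        - e.repr ξ 1 • (ι R (e 2) * ι R (e 3) + ι R (e 5) * ι R (e 0)) := by
  simp [cyclicThreeForm, mul_assoc, CliffordAlgebra.contractLeft_ι_mul,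
    CliffordAlgebra.contractLeft_ι, Algebra.algebraMap_eq_smul_one]

theorem topCoeff_contractLeft_contractLeft_ι_mul_cyclicThreeForm_mul_self (ξ : M) :
    topCoeff R e ((e.coord 1⌋(e.coord 4⌋(ι R ξ * cyclicThreeForm R e))) *
      (ι R ξ * cyclicThreeForm R e)) = -(2 * e.repr ξ 1 ^ 2) := by
  rw [contractLeft_contractLeft_ι_mul_cyclicThreeForm]
  simp [topCoeff, cyclicThreeForm, mul_assoc, CliffordAlgebra.contractLeft_ι_mul,
    CliffordAlgebra.contractLeft_ι, Algebra.algebraMap_eq_smul_one, sub_mul, add_mul, mul_add,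
    mul_sub, smul_sub, smul_add]
  ring

theorem repr_one_eq_zero_of_ι_mul_cyclicThreeForm_eq_ιMulti [IsDomain R] [NeZero (2 : R)]
    {ξ : M} {η : Fin 4 → M} (h : ι R ξ * cyclicThreeForm R e = ιMulti R 4 η) :
    e.repr ξ 1 = 0 := by
  have hcoeff := topCoeff_contractLeft_contractLeft_ι_mul_cyclicThreeForm_mul_self e ξ
  rw [h, contractLeft_contractLeft_ιMulti_mul_ιMulti (n := 1)] at hcoeff
  simpa [topCoeff, two_ne_zero] using hcoeff

theorem mem_span_of_ι_mul_cyclicThreeForm_eq_ιMulti [IsDomain R] [NeZero (2 : R)] {ξ : M}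
    {η : Fin 4 → M} (h : ι R ξ * cyclicThreeForm R e = ιMulti R 4 η) :
    ξ ∈ Submodule.span R {e 0, e 2, e 4} := by
  have shift (e' : Module.Basis (Fin 6) R M)
      (h' : ι R ξ * cyclicThreeForm R e' = ιMulti R 4 η) :
      ι R ξ * cyclicThreeForm R (e'.reindex (Equiv.addRight 2).symm) = ιMulti R 4 η := by
    rwa [Module.Basis.coe_reindex, Equiv.symm_symm, Equiv.coe_addRight,
      cyclicThreeForm_comp_add_two]
  have h₁ := repr_one_eq_zero_of_ι_mul_cyclicThreeForm_eq_ιMulti e h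
  have h₃ := repr_one_eq_zero_of_ι_mul_cyclicThreeForm_eq_ιMulti _ (shift e h)
  have h₅ := repr_one_eq_zero_of_ι_mul_cyclicThreeForm_eq_ιMulti _ (shift _ (shift e h))
  simp only [Module.Basis.repr_reindex_apply, Equiv.symm_symm, Equiv.coe_addRight,
    Fin.reduceAdd] at h₃ h₅
  refine Submodule.mem_span_triple.mpr ⟨e.repr ξ 0, e.repr ξ 2, e.repr ξ 4, ?_⟩
  conv_rhs => rw [← e.sum_repr ξ, Fin.sum_univ_six, h₁, h₃, h₅]
  simp only [zero_smul, add_zero]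

end Basis

end ExteriorAlgebra

theorem stmt6_general (V : Type*) [AddCommGroup V] [Module ℝ V]
    (b : Module.Basis (Fin 6) ℝ (Module.Dual ℝ V)) :
    {ξ : Module.Dual ℝ V |
      ∃ η : Fin 4 → Module.Dual ℝ V,
        ExteriorAlgebra.ι ℝ ξ *
            (ExteriorAlgebra.ι ℝ (b 0) * ExteriorAlgebra.ι ℝ (b 1) * ExteriorAlgebra.ι ℝ (b 2)
              + ExteriorAlgebra.ι ℝ (b 2) * ExteriorAlgebra.ι ℝ (b 3) * ExteriorAlgebra.ι ℝ (b 4)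
              + ExteriorAlgebra.ι ℝ (b 4) * ExteriorAlgebra.ι ℝ (b 5) * ExteriorAlgebra.ι ℝ (b 0))
          = (List.ofFn fun i => ExteriorAlgebra.ι ℝ (η i)).prod}
      = ↑(Submodule.span ℝ {b 0, b 2, b 4}) := by
  ext ξ
  exact ⟨fun ⟨_, hη⟩ => ExteriorAlgebra.mem_span_of_ι_mul_cyclicThreeForm_eq_ιMulti b hη,
    ExteriorAlgebra.exists_ι_mul_cyclicThreeForm_eq_ιMulti_of_mem_span b⟩

/-- In a six-dimensional real vector space `V` with basis `ξ¹, …, ξ⁶` of `V*`,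
for `μ = ξ¹∧ξ²∧ξ³ + ξ³∧ξ⁴∧ξ⁵ + ξ⁵∧ξ⁶∧ξ¹`, the set of `ξ ∈ V*` with `ξ ∧ μ`
decomposable is exactly the span of `ξ¹, ξ³, ξ⁵`. (Indices are 0-based below.) -/
theorem stmt6 (V : Type*) [AddCommGroup V] [Module ℝ V] [FiniteDimensional ℝ V]
    (hdim : Module.finrank ℝ V = 6)
    (b : Module.Basis (Fin 6) ℝ (Module.Dual ℝ V)) :
    {ξ : Module.Dual ℝ V |
      ∃ η : Fin 4 → Module.Dual ℝ V,
        ExteriorAlgebra.ι ℝ ξ *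
            (ExteriorAlgebra.ι ℝ (b 0) * ExteriorAlgebra.ι ℝ (b 1) * ExteriorAlgebra.ι ℝ (b 2)
              + ExteriorAlgebra.ι ℝ (b 2) * ExteriorAlgebra.ι ℝ (b 3) * ExteriorAlgebra.ι ℝ (b 4)
              + ExteriorAlgebra.ι ℝ (b 4) * ExteriorAlgebra.ι ℝ (b 5) * ExteriorAlgebra.ι ℝ (b 0))
          = (List.ofFn fun i => ExteriorAlgebra.ι ℝ (η i)).prod}
      = ↑(Submodule.span ℝ {b 0, b 2, b 4}) :=
  stmt6_general V b
end

section
/- Let V be a real vector space of even dimension n = 2m with m ≥ 1, let ξ¹, …, ξⁿ be a basis of V*, and set σ_j = ξ^{2j−1} ∧ ξ^{2j} for j = 1, …, m. Then the exterior (n−2)-form μ = Σ_{i=1}^{m} σ₁ ∧ … ∧ σ_{i−1} ∧ σ_{i+1} ∧ … ∧ σ_m (the i-th factor omitted in each summand) is indivisible: ξ ∧ μ ≠ 0 for every nonzero ξ ∈ V*. (This says that the (n−2)-form dual to a nondegenerate exterior 2-form is indivisible.) -/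
/-!
Choose `k` with `ξ_k ≠ 0` and let `k'` be the other index of the pair `{2i₀, 2i₀+1}` containing
`k`. The products `σ_j` are even, so they commute with every `ι x * ι y`, and
`ι (b a) * ι (b c) * σ_j = 0` as soon as `a` or `c` lies in the pair `j`. Hence multiplying
`ξ ∧ μ` on the left by `ι (b k')` kills every term except
`ξ_k • ι (b k') * ι (b k) * ∏_{j ≠ i₀} σ_j = ± ξ_k • b_0 ∧ ⋯ ∧ b_{n-1}`,
on which the determinant functional of `b` takes the value `± ξ_k ≠ 0`.
-/

theorem List.mul_prod_eq_zero_of_commute {M₀ : Type*} [MonoidWithZero M₀] {x y : M₀}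
    {l : List M₀} (hx : ∀ z ∈ l, Commute x z) (hy : y ∈ l) (hxy : x * y = 0) :
    x * l.prod = 0 := by
  induction l with
  | nil => simp at hy
  | cons a t ih =>
    rw [List.prod_cons, ← mul_assoc]
    rcases List.mem_cons.mp hy with rfl | hy
    · rw [hxy, zero_mul]
    · rw [(hx a List.mem_cons_self).eq, mul_assoc,
        ih (fun z hz => hx z (List.mem_cons_of_mem a hz)) hy, mul_zero]

theorem List.mul_prod_ofFn_ite_one {M : Type*} [Monoid M] {m : ℕ} (f : Fin m → M) (i : Fin m)
    (hf : ∀ j, Commute (f i) (f j)) :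
    f i * (List.ofFn fun j => if j = i then 1 else f j).prod = (List.ofFn f).prod := by
  induction m with
  | zero => exact i.elim0
  | succ m ih =>
    simp only [List.ofFn_succ, List.prod_cons]
    induction i using Fin.cases with
    | zero => simp [Fin.succ_ne_zero]
    | succ i =>
      rw [if_neg (Fin.succ_ne_zero i).symm, ← mul_assoc, (hf 0).eq, mul_assoc]
      simp only [Fin.succ_inj]
      exact congrArg (f 0 * ·) (ih (fun j => f j.succ) i fun j => hf j.succ)

theorem List.prod_ofFn_two_mul {M : Type*} [Monoid M] {m : ℕ} (f : Fin (2 * m) → M) :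
    (List.ofFn fun j : Fin m => f ⟨2 * j, by omega⟩ * f ⟨2 * j + 1, by omega⟩).prod =
      (List.ofFn f).prod := by
  rw [List.ofFn_mul' f, List.prod_flatten, List.map_ofFn]
  simp [List.ofFn_succ, Function.comp_def]

noncomputable section

namespace ExteriorAlgebra

variable {R M : Type*} [CommRing R] [AddCommGroup M] [Module R M]

theorem ι_mul_ι_eq_neg (x y : M) : ι R x * ι R y = -(ι R y * ι R x) :=
  eq_neg_of_add_eq_zero_left (ι_add_mul_swap x y)

theorem commute_ι_mul_ι_ι (x y z : M) : Commute (ι R x * ι R y) (ι R z) := by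
  rw [Commute, SemiconjBy, mul_assoc, ι_mul_ι_eq_neg y z, mul_neg, ← mul_assoc,
    ι_mul_ι_eq_neg x z, neg_mul, neg_neg, mul_assoc]

theorem commute_ι_mul_ι (x y z w : M) : Commute (ι R x * ι R y) (ι R z * ι R w) :=
  (commute_ι_mul_ι_ι x y z).mul_right (commute_ι_mul_ι_ι x y w)

theorem ι_mul_ι_mul_ι_mul_ι_eq_zero {x y z w : M} (h : x = z ∨ x = w ∨ y = z ∨ y = w) :
    ι R x * ι R y * (ι R z * ι R w) = 0 := by
  have hv : ¬Function.Injective ![x, y, z, w] := by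
    intro hinj
    rcases h with h | h | h | h
    · exact absurd (@hinj 0 2 h) (by decide)
    · exact absurd (@hinj 0 3 h) (by decide)
    · exact absurd (@hinj 1 2 h) (by decide)
    · exact absurd (@hinj 1 3 h) (by decide)
  simpa [ιMulti_apply, List.ofFn_succ, mul_assoc] using ιMulti_eq_zero_of_not_inj (R := R) hv

theorem smul_ιMulti_basis_ne_zero {n : ℕ} (b : Module.Basis (Fin n) R M) {c : R} (hc : c ≠ 0) :
    c • ιMulti R n b ≠ 0 := by
  intro h
  have := congrArg (liftAlternating (R := R) (M := M) (N := R) (Pi.single n b.det)) h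
  rw [map_smul, liftAlternating_apply_ιMulti, Pi.single_eq_same, b.det_self, smul_eq_mul,
    mul_one, map_zero] at this
  exact hc this

variable {m : ℕ} (b : Module.Basis (Fin (2 * m)) R M)

def pairProduct (j : Fin m) : ExteriorAlgebra R M :=
  ι R (b ⟨2 * j, by omega⟩) * ι R (b ⟨2 * j + 1, by omega⟩)

def prodPairProductExcept (i : Fin m) : ExteriorAlgebra R M :=
  (List.ofFn fun j => if j = i then 1 else pairProduct b j).prod

/-- The `(n-2)`-form `μ`, with the omitted factor `σ_i = pairProduct b i` replaced by `1`. -/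
def dualForm : ExteriorAlgebra R M :=
  ∑ i, prodPairProductExcept b i

theorem pairProduct_mul_prodPairProductExcept (i : Fin m) :
    pairProduct b i * prodPairProductExcept b i = ιMulti R (2 * m) b := by
  rw [prodPairProductExcept, List.mul_prod_ofFn_ite_one _ _ fun j => commute_ι_mul_ι _ _ _ _,
    ιMulti_apply]
  exact List.prod_ofFn_two_mul fun r => ι R (b r)

theorem ι_mul_ι_eq_pairProduct_or_neg {a c : Fin (2 * m)} {i : Fin m} (ha : (a : ℕ) / 2 = i)
    (hc : (c : ℕ) / 2 = i) (hac : a ≠ c) :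
    ι R (b a) * ι R (b c) = pairProduct b i ∨ ι R (b a) * ι R (b c) = -pairProduct b i := by
  rw [Ne, Fin.ext_iff] at hac
  rcases (by omega :
      (a : ℕ) = 2 * i ∧ (c : ℕ) = 2 * i + 1 ∨ (a : ℕ) = 2 * i + 1 ∧ (c : ℕ) = 2 * i) with
    ⟨ha', hc'⟩ | ⟨ha', hc'⟩
  · left
    rw [pairProduct, congrArg b (Fin.ext ha' : a = ⟨2 * i, by omega⟩),
      congrArg b (Fin.ext hc' : c = ⟨2 * i + 1, by omega⟩)]
  · right
    rw [pairProduct, ι_mul_ι_eq_neg, congrArg b (Fin.ext ha' : a = ⟨2 * i + 1, by omega⟩),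
      congrArg b (Fin.ext hc' : c = ⟨2 * i, by omega⟩)]

theorem ι_mul_ι_mul_pairProduct_eq_zero {a c : Fin (2 * m)} {j : Fin m}
    (h : (a : ℕ) / 2 = j ∨ (c : ℕ) / 2 = j) :
    ι R (b a) * ι R (b c) * pairProduct b j = 0 := by
  apply ι_mul_ι_mul_ι_mul_ι_eq_zero
  have key : ∀ r : Fin (2 * m), (r : ℕ) / 2 = j →
      b r = b ⟨2 * j, by omega⟩ ∨ b r = b ⟨2 * j + 1, by omega⟩ := by
    intro r hr
    rcases (by omega : (r : ℕ) = 2 * j ∨ (r : ℕ) = 2 * j + 1) with h | h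
    · exact .inl (congrArg b (Fin.ext h))
    · exact .inr (congrArg b (Fin.ext h))
  rcases h with h | h
  · exact (key a h).elim .inl (.inr ∘ .inl)
  · exact (key c h).elim (.inr ∘ .inr ∘ .inl) (.inr ∘ .inr ∘ .inr)

theorem ι_mul_ι_mul_prodPairProductExcept_eq_zero {a c : Fin (2 * m)} {i : Fin m}
    (h : (a : ℕ) / 2 ≠ i ∨ (c : ℕ) / 2 ≠ i) :
    ι R (b a) * ι R (b c) * prodPairProductExcept b i = 0 := by
  obtain ⟨j, hji, hj⟩ : ∃ j : Fin m, j ≠ i ∧ ((a : ℕ) / 2 = j ∨ (c : ℕ) / 2 = j) := by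
    rcases h with h | h
    · exact ⟨⟨a / 2, by omega⟩, fun e => h (congrArg Fin.val e), .inl rfl⟩
    · exact ⟨⟨c / 2, by omega⟩, fun e => h (congrArg Fin.val e), .inr rfl⟩
  refine List.mul_prod_eq_zero_of_commute ?_ (List.mem_ofFn.mpr ⟨j, if_neg hji⟩)
    (ι_mul_ι_mul_pairProduct_eq_zero b hj)
  rintro z hz
  obtain ⟨j', rfl⟩ := List.mem_ofFn.mp hz
  split_ifs
  · exact Commute.one_right _
  · exact commute_ι_mul_ι _ _ _ _

theorem ι_mul_ι_mul_dualForm {k k' : Fin (2 * m)} {i : Fin m} (hk : (k : ℕ) / 2 = i)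
    (hk' : (k' : ℕ) / 2 = i) (hk'k : k' ≠ k) (ξ : M) :
    ι R (b k') * (ι R ξ * dualForm b) =
      b.repr ξ k • (ι R (b k') * ι R (b k) * prodPairProductExcept b i) := by
  have hterm : ∀ p : Fin m × Fin (2 * m), p ≠ (i, k) →
      ι R (b k') * ι R (b p.2) * prodPairProductExcept b p.1 = 0 := by
    rintro ⟨j, l⟩ hp
    by_cases hl : l = k'
    · rw [hl, ι_sq_zero, zero_mul]
    apply ι_mul_ι_mul_prodPairProductExcept_eq_zero
    simp only [Ne, Prod.ext_iff, Fin.ext_iff] at hl hk'k hp ⊢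
    omega
  conv_lhs => rw [← b.sum_repr ξ]
  simp only [map_sum, map_smul, dualForm, Finset.sum_mul, Finset.mul_sum, smul_mul_assoc,
    mul_smul_comm, ← mul_assoc]
  rw [← Fintype.sum_prod_type', Fintype.sum_eq_single (i, k)]
  intro p hp
  rw [hterm p hp, smul_zero]

theorem ι_mul_dualForm_ne_zero {ξ : M} (hξ : ξ ≠ 0) : ι R ξ * dualForm b ≠ 0 := by
  obtain ⟨k, hk⟩ : ∃ k, b.repr ξ k ≠ 0 :=
    Finsupp.ne_iff.mp ((LinearEquiv.map_ne_zero_iff b.repr).mpr hξ)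
  let i : Fin m := ⟨k / 2, by omega⟩
  obtain ⟨k', hk'k, hk'⟩ : ∃ k' : Fin (2 * m), k' ≠ k ∧ (k' : ℕ) / 2 = i :=
    ⟨⟨2 * (k / 2) + 1 - k % 2, by omega⟩, by simp only [Ne, Fin.ext_iff]; omega,
      by simp only [i]; omega⟩
  intro h
  have hzero := ι_mul_ι_mul_dualForm b rfl hk' hk'k ξ
  rw [h, mul_zero, eq_comm] at hzero
  rcases ι_mul_ι_eq_pairProduct_or_neg b hk' rfl hk'k with hσ | hσ <;>
    simp only [hσ, neg_mul, pairProduct_mul_prodPairProductExcept, smul_neg, neg_eq_zero]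
      at hzero <;>
    exact smul_ιMulti_basis_ne_zero b hk hzero

end ExteriorAlgebra

end

/-- In a real vector space `V` of even dimension `n = 2m` (`m ≥ 1`) with a
basis `ξ¹, …, ξⁿ` of `V*`, setting `σ_j = ξ^{2j-1} ∧ ξ^{2j}`, the `(n-2)`-form
`μ = Σ_i σ₁ ∧ ⋯ ∧ σ̂_i ∧ ⋯ ∧ σ_m` (the hat marking the omitted factor, realized below by
replacing it with `1`) is indivisible: `ξ ∧ μ ≠ 0` for every nonzero `ξ ∈ V*`.
(0-based indices: `σ_j = ξ^{2j} ∧ ξ^{2j+1}`.) -/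
theorem stmt8 (V : Type*) [AddCommGroup V] [Module ℝ V]
    (m : ℕ)
    (b : Module.Basis (Fin (2 * m)) ℝ (Module.Dual ℝ V)) :
    ∀ ξ : Module.Dual ℝ V, ξ ≠ 0 →
      ExteriorAlgebra.ι ℝ ξ *
        (∑ i : Fin m,
          (List.ofFn fun j : Fin m =>
            if j = i then 1
            else ExteriorAlgebra.ι ℝ (b ⟨2 * (j : ℕ), by have := j.isLt; omega⟩) *
                 ExteriorAlgebra.ι ℝ (b ⟨2 * (j : ℕ) + 1, by have := j.isLt; omega⟩)).prod)
        ≠ 0 :=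
  fun _ hξ => ExteriorAlgebra.ι_mul_dualForm_ne_zero b hξ
end

section
/- Let μ be a nonzero exterior p-form on an n-dimensional real vector space V, where 1 ≤ p ≤ n, and let r be the rank of μ. Then p ≤ r ≤ n, r ≠ p + 1, and r = p holds if and only if μ is decomposable. -/
/-!
A nonzero `p`-form pulled back from `ℝᵏ` forces `p ≤ k`, because `p`-forms vanish on linearly
dependent families. Every `n`-form on an `(n+1)`-dimensional space is a contraction
`det (w, ·, …, ·)`, since `w ↦ det (w, ·, …, ·)` is injective between spaces of the same
dimension `n + 1`; such a form vanishes as soon as one argument lies on the line through `w`, so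
it descends to the `n`-dimensional quotient by that line. This rules out rank `p + 1`. In
dimension `p` a form is a multiple of the determinant, and the multiple is absorbed into one of
the covectors.
-/

open Module Function

/-- The wedge product `ξ¹ ∧ ⋯ ∧ ξᵖ` of a family of linear functionals, as the alternating
map `(v₁, …, v_p) ↦ det [ξⁱ(v_j)]`. -/
noncomputable def wedgeFam {V : Type*} [AddCommGroup V] [Module ℝ V] {p : ℕ}
    (ξ : Fin p → Module.Dual ℝ V) : V [⋀^Fin p]→ₗ[ℝ] ℝ :=
  (Matrix.detRowAlternating).compLinearMap (LinearMap.pi ξ)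

namespace AlternatingMap

section CommRing

variable {R M N ι : Type*} [CommRing R] [AddCommGroup M] [Module R M] [AddCommGroup N]
  [Module R N]

theorem map_add_eq_of_forall_mem [Fintype ι] (f : M [⋀^ι]→ₗ[R] N) {U : Submodule R M}
    (hU : ∀ v i, v i ∈ U → f v = 0) (v : ι → M) {u : ι → M} (hu : ∀ i, u i ∈ U) :
    f (v + u) = f v := by
  classical
  rw [map_add_univ, Finset.sum_eq_single Finset.univ (fun t _ ht => ?_) (by simp),
    Finset.piecewise_univ]
  obtain ⟨i, hi⟩ : ∃ i, i ∉ t := by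
    by_contra! h
    exact ht (Finset.eq_univ_iff_forall.2 h)
  exact hU _ i (by simpa [Finset.piecewise_eq_of_notMem _ _ _ hi] using hu i)

variable (R) in
def FactorsThroughFin (μ : M [⋀^ι]→ₗ[R] N) (k : ℕ) : Prop :=
  ∃ (f : M →ₗ[R] (Fin k → R)) (ν : (Fin k → R) [⋀^ι]→ₗ[R] N),
    μ = ν.compLinearMap f

end CommRing

variable {K M N : Type*} [Field K] [AddCommGroup M] [Module K M] [AddCommGroup N] [Module K N]

theorem exists_eq_compLinearMap_mkQ {ι : Type*} [Fintype ι] (f : M [⋀^ι]→ₗ[K] N)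
    (U : Submodule K M) (hU : ∀ v i, v i ∈ U → f v = 0) :
    ∃ g : (M ⧸ U) [⋀^ι]→ₗ[K] N, f = g.compLinearMap U.mkQ := by
  obtain ⟨s, hs⟩ := U.mkQ.exists_rightInverse_of_surjective U.range_mkQ
  refine ⟨f.compLinearMap s, ext fun v => ?_⟩
  have hmem : ∀ i, s (U.mkQ (v i)) - v i ∈ U := fun i =>
    (Submodule.Quotient.eq U).1 (by simpa using LinearMap.congr_fun hs (U.mkQ (v i)))
  have := map_add_eq_of_forall_mem f hU v hmem
  simp only [Pi.add_def, add_sub_cancel] at this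
  exact this.symm

theorem finrank_eq_choose [FiniteDimensional K M] (n : ℕ) :
    finrank K (M [⋀^Fin n]→ₗ[K] K) = (finrank K M).choose n := by
  rw [exteriorPower.alternatingMapLinearEquiv.finrank_eq, Subspace.dual_finrank_eq,
    exteriorPower.finrank_eq]

instance [FiniteDimensional K M] (n : ℕ) : FiniteDimensional K (M [⋀^Fin n]→ₗ[K] K) :=
  Module.Finite.equiv exteriorPower.alternatingMapLinearEquiv.symm

end AlternatingMap

namespace Module.Basis

variable {K M : Type*} [Field K] [AddCommGroup M] [Module K M] {n : ℕ}

theorem exists_det_cons_ne_zero (e : Basis (Fin (n + 1)) K M) {w : M} (hw : w ≠ 0) :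
    ∃ v : Fin n → M, e.det (Fin.cons w v) ≠ 0 := by
  obtain ⟨i, hi⟩ : ∃ i, e.repr w i ≠ 0 := by
    by_contra! h
    exact hw (e.repr.injective (Finsupp.ext fun i => by simp [h]))
  have hli : LinearIndependent K (Fin.cons w (e ∘ i.succAbove) : Fin (n + 1) → M) := by
    refine linearIndependent_finCons.2
      ⟨e.linearIndependent.comp _ Fin.succAbove_right_injective, fun hmem => ?_⟩
    rw [Set.range_comp, Fin.range_succAbove, e.mem_span_image] at hmem
    exact hmem (Finsupp.mem_support_iff.2 hi) rfl
  refine ⟨e ∘ i.succAbove, ?_⟩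
  have := (e.isUnit_det (basisOfLinearIndependentOfCardEqFinrank hli
    (by simp [finrank_eq_card_basis e]))).ne_zero
  rwa [coe_basisOfLinearIndependentOfCardEqFinrank] at this

theorem det_curryLeft_surjective (e : Basis (Fin (n + 1)) K M) :
    Surjective e.det.curryLeft := by
  have := Module.Finite.of_basis e
  refine (LinearMap.injective_iff_surjective_of_finrank_eq_finrank ?_).1 <|
    (injective_iff_map_eq_zero _).2 fun w hw => ?_
  · rw [AlternatingMap.finrank_eq_choose, finrank_eq_card_basis e, Fintype.card_fin,
      Nat.choose_succ_self_right]
  · by_contra hw0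
    obtain ⟨v, hv⟩ := e.exists_det_cons_ne_zero hw0
    exact hv congr($hw v)

end Module.Basis

namespace AlternatingMap

variable {K M N : Type*} [Field K] [AddCommGroup M] [Module K M] [AddCommGroup N] [Module K N]

theorem det_curryLeft_apply_eq_zero_of_mem_span {n : ℕ} (e : Basis (Fin (n + 1)) K M) {w : M}
    (v : Fin n → M) (i : Fin n) (hi : v i ∈ K ∙ w) : e.det.curryLeft w v = 0 := by
  obtain ⟨c, hc⟩ := Submodule.mem_span_singleton.1 hi
  have hv : (Matrix.vecCons w v : Fin (n + 1) → M) =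
      update (Matrix.vecCons w v) i.succ (c • Matrix.vecCons w v 0) := by
    simp [hc]
  rw [curryLeft_apply_apply, hv, map_update_smul,
    map_eq_zero_of_eq _ _ (i := 0) (j := i.succ)
      (by simp [update_of_ne (Fin.succ_ne_zero i).symm]) (Fin.succ_ne_zero i).symm, smul_zero]

theorem exists_eq_compLinearMap_of_finrank_eq_succ {n : ℕ} (h : finrank K M = n + 1)
    (ν : M [⋀^Fin n]→ₗ[K] K) :
    ∃ (π : M →ₗ[K] (Fin n → K)) (ν' : (Fin n → K) [⋀^Fin n]→ₗ[K] K),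
      ν = ν'.compLinearMap π := by
  have := Module.finite_of_finrank_eq_succ h
  set e := finBasisOfFinrankEq K M h
  obtain ⟨w, rfl⟩ := e.det_curryLeft_surjective ν
  rcases eq_or_ne w 0 with rfl | hw
  · exact ⟨0, 0, by simp⟩
  obtain ⟨g, hg⟩ := exists_eq_compLinearMap_mkQ (e.det.curryLeft w) (K ∙ w)
    fun v i => det_curryLeft_apply_eq_zero_of_mem_span e v i
  have hquot : finrank K (M ⧸ K ∙ w) = finrank K (Fin n → K) := by
    have := (K ∙ w).finrank_quotient_add_finrank
    rw [finrank_span_singleton hw, h] at this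
    simpa using this
  let φ := LinearEquiv.ofFinrankEq _ _ hquot
  refine ⟨φ ∘ₗ (K ∙ w).mkQ, g.compLinearMap φ.symm, ?_⟩
  rw [compLinearMap_assoc, ← LinearMap.comp_assoc, LinearEquiv.symm_comp, LinearMap.id_comp,
    hg]

section FactorsThroughFin

variable {V ι : Type*} [AddCommGroup V] [Module K V] {μ : V [⋀^ι]→ₗ[K] N} {k : ℕ}

theorem factorsThroughFin_finrank [FiniteDimensional K V] (μ : V [⋀^ι]→ₗ[K] N) :
    FactorsThroughFin K μ (finrank K V) := by
  let φ := (finBasis K V).equivFun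
  exact ⟨φ, μ.compLinearMap φ.symm, by ext; simp⟩

theorem FactorsThroughFin.card_le [Fintype ι] (h : FactorsThroughFin K μ k) (hμ : μ ≠ 0) :
    Fintype.card ι ≤ k := by
  obtain ⟨f, ν, rfl⟩ := h
  by_contra! hk
  refine hμ (ext fun v => ν.map_linearDependent _ fun hli => ?_)
  have := hli.fintype_card_le_finrank
  simp only [finrank_fin_fun] at this
  omega

theorem FactorsThroughFin.of_succ {n : ℕ} {μ : V [⋀^Fin n]→ₗ[K] K}
    (h : FactorsThroughFin K μ (n + 1)) : FactorsThroughFin K μ n := by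
  obtain ⟨f, ν, rfl⟩ := h
  obtain ⟨π, ν', rfl⟩ := exists_eq_compLinearMap_of_finrank_eq_succ (by simp) ν
  exact ⟨π ∘ₗ f, ν', compLinearMap_assoc _ _ _⟩

end FactorsThroughFin

end AlternatingMap

theorem wedgeFam_update_smul {V : Type*} [AddCommGroup V] [Module ℝ V] {p : ℕ}
    (ξ : Fin p → Dual ℝ V) (i : Fin p) (c : ℝ) :
    wedgeFam (update ξ i (c • ξ i)) = c • wedgeFam ξ := by
  ext v
  set A : Matrix (Fin p) (Fin p) ℝ := .of fun k j => ξ j (v k)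
  have hA : (fun k => LinearMap.pi (update ξ i (c • ξ i)) (v k)) =
      A.updateCol i (c • fun k => A k i) := by
    ext k j
    rcases eq_or_ne j i with rfl | hj <;> simp [A, update_of_ne, *]
  simp only [wedgeFam, AlternatingMap.compLinearMap_apply, AlternatingMap.smul_apply, hA]
  exact (Matrix.det_updateCol_smul A i c _).trans (by rw [Matrix.updateCol_eq_self]; rfl)

namespace AlternatingMap

variable {V : Type*} [AddCommGroup V] [Module ℝ V] {p : ℕ}

theorem factorsThroughFin_wedgeFam (ξ : Fin p → Dual ℝ V) :
    FactorsThroughFin ℝ (wedgeFam ξ) p :=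
  ⟨LinearMap.pi ξ, Matrix.detRowAlternating, rfl⟩

theorem FactorsThroughFin.exists_eq_wedgeFam (hp : 0 < p) {μ : V [⋀^Fin p]→ₗ[ℝ] ℝ}
    (h : FactorsThroughFin ℝ μ p) : ∃ ξ : Fin p → Dual ℝ V, μ = wedgeFam ξ := by
  obtain ⟨f, ν, rfl⟩ := h
  let ξ : Fin p → Dual ℝ V := fun i => LinearMap.proj i ∘ₗ f
  let c := ν (Pi.basisFun ℝ (Fin p))
  refine ⟨update ξ ⟨0, hp⟩ (c • ξ ⟨0, hp⟩), ?_⟩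
  rw [wedgeFam_update_smul, ν.eq_smul_basis_det (Pi.basisFun ℝ (Fin p)), Pi.basisFun_det]
  rfl

end AlternatingMap

open AlternatingMap

theorem stmt13_general (V : Type*) [AddCommGroup V] [Module ℝ V] [FiniteDimensional ℝ V]
    (p : ℕ) (hp1 : 1 ≤ p)
    (μ : V [⋀^Fin p]→ₗ[ℝ] ℝ) (hμ0 : μ ≠ 0) (r : ℕ)
    (hr : IsLeast {k : ℕ | ∃ (f : V →ₗ[ℝ] (Fin k → ℝ))
        (ν : (Fin k → ℝ) [⋀^Fin p]→ₗ[ℝ] ℝ), μ = ν.compLinearMap f} r) :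
    p ≤ r ∧ r ≤ Module.finrank ℝ V ∧ r ≠ p + 1 ∧
      (r = p ↔ ∃ ξ : Fin p → Module.Dual ℝ V, μ = wedgeFam ξ) := by
  have hrank : FactorsThroughFin ℝ μ r := hr.1
  have hpr : p ≤ r := by simpa using hrank.card_le hμ0
  refine ⟨hpr, hr.2 (factorsThroughFin_finrank μ), fun hrp => ?_, fun hrp => ?_, ?_⟩
  · subst hrp
    have := hr.2 hrank.of_succ
    omega
  · subst hrp
    exact hrank.exists_eq_wedgeFam hp1
  · rintro ⟨ξ, rfl⟩
    exact le_antisymm (hr.2 (factorsThroughFin_wedgeFam ξ)) hpr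

/-- For a nonzero exterior `p`-form `μ` (`1 ≤ p ≤ n`) on an `n`-dimensional
real vector space `V`, if `r` is the rank of `μ` (the least dimension of a vector space
`W` such that `μ` is the pullback of a `p`-form on `W` under a linear map `V → W`), then
`p ≤ r ≤ n`, `r ≠ p + 1`, and `r = p` iff `μ` is decomposable. -/
theorem stmt13 (V : Type*) [AddCommGroup V] [Module ℝ V] [FiniteDimensional ℝ V]
    (p : ℕ) (hp1 : 1 ≤ p) (hpn : p ≤ Module.finrank ℝ V)
    (μ : V [⋀^Fin p]→ₗ[ℝ] ℝ) (hμ0 : μ ≠ 0) (r : ℕ)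
    (hr : IsLeast {k : ℕ | ∃ (f : V →ₗ[ℝ] (Fin k → ℝ))
        (ν : (Fin k → ℝ) [⋀^Fin p]→ₗ[ℝ] ℝ), μ = ν.compLinearMap f} r) :
    p ≤ r ∧ r ≤ Module.finrank ℝ V ∧ r ≠ p + 1 ∧
      (r = p ↔ ∃ ξ : Fin p → Module.Dual ℝ V, μ = wedgeFam ξ) :=
  stmt13_general V p hp1 μ hμ0 r hr
end

section
/- Let μ be a nonzero exterior p-form on an n-dimensional real vector space V, where 1 ≤ p ≤ n, let r be the rank of μ, and let Z be the kernel of μ. Then dim Z = n − r. -/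
/-!
A vector in the kernel `Z` of `μ` may be added to any argument of `μ` without changing its value,
so `μ` factors through the projection onto a complement of `Z`, whence `rank μ ≤ n - dim Z`.
Conversely, if `μ = ν ∘ f` then `ker f ⊆ Z`, so `n - dim Z ≤ dim (range f) ≤ rank μ`.
-/

open Module LinearMap

namespace AlternatingMap

section CommRing

variable {R M N P : Type*} [CommRing R] [AddCommGroup M] [Module R M] [AddCommGroup N]
  [Module R N] [AddCommGroup P] [Module R P] {n : ℕ}

theorem map_eq_zero_of_mem_ker_curryLeft (μ : M [⋀^Fin (n + 1)]→ₗ[R] N) {z : M}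
    (hz : z ∈ ker μ.curryLeft) {m : Fin (n + 1) → M} {i : Fin (n + 1)} (hi : m i = z) :
    μ m = 0 := by
  have hswap : μ (m ∘ Equiv.swap i 0) = 0 := by
    rw [← Matrix.cons_head_tail (m ∘ Equiv.swap i 0), ← curryLeft_apply_apply]
    simp [Matrix.vecHead, hi, mem_ker.mp hz]
  rwa [map_perm, smul_eq_zero_iff_eq] at hswap

theorem map_add_of_mem_ker_curryLeft (μ : M [⋀^Fin (n + 1)]→ₗ[R] N) (m : Fin (n + 1) → M)
    {z : Fin (n + 1) → M} (hz : ∀ i, z i ∈ ker μ.curryLeft) : μ (m + z) = μ m := by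
  classical
  rw [map_add_univ, Finset.sum_eq_single Finset.univ]
  · rw [Finset.piecewise_univ]
  · intro s _ hs
    obtain ⟨i, hi⟩ : ∃ i, i ∉ s := by simpa [Finset.eq_univ_iff_forall] using hs
    exact μ.map_eq_zero_of_mem_ker_curryLeft (hz i) (Finset.piecewise_eq_of_notMem _ _ _ hi)
  · simp

theorem compLinearMap_eq_self_of_sub_mem_ker_curryLeft (μ : M [⋀^Fin (n + 1)]→ₗ[R] N)
    {f : M →ₗ[R] M} (hf : ∀ v, v - f v ∈ ker μ.curryLeft) : μ.compLinearMap f = μ := by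
  ext m
  have := μ.map_add_of_mem_ker_curryLeft (f ∘ m) (z := m - f ∘ m) fun i ↦ hf (m i)
  rwa [add_sub_cancel, eq_comm] at this

theorem compLinearMap_subtype_projectionOnto_ker_curryLeft (μ : M [⋀^Fin (n + 1)]→ₗ[R] N)
    {C : Submodule R M} (hC : IsCompl C (ker μ.curryLeft)) :
    (μ.compLinearMap C.subtype).compLinearMap (C.projectionOnto _ hC) = μ := by
  rw [compLinearMap_assoc]
  exact μ.compLinearMap_eq_self_of_sub_mem_ker_curryLeft (Submodule.sub_projection_mem hC)

theorem ker_le_ker_curryLeft_compLinearMap (ν : P [⋀^Fin (n + 1)]→ₗ[R] N) (f : M →ₗ[R] P) :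
    ker f ≤ ker (ν.compLinearMap f).curryLeft := by
  intro v hv
  ext w
  exact ν.map_coord_zero 0 (by simpa using hv)

end CommRing

section Field

variable {K V W N : Type*} [Field K] [AddCommGroup V] [Module K V] [FiniteDimensional K V]
  [AddCommGroup W] [Module K W] [AddCommGroup N] [Module K N] {n : ℕ}

theorem finrank_sub_finrank_ker_curryLeft_le [FiniteDimensional K W]
    (ν : W [⋀^Fin (n + 1)]→ₗ[K] N) (f : V →ₗ[K] W) :
    finrank K V - finrank K (ker (ν.compLinearMap f).curryLeft) ≤ finrank K W := by
  have hker := Submodule.finrank_mono (ν.ker_le_ker_curryLeft_compLinearMap f)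
  have hrange := Submodule.finrank_le (range f)
  have := finrank_range_add_finrank_ker f
  omega

theorem exists_eq_compLinearMap_fin_finrank_sub_finrank_ker (μ : V [⋀^Fin (n + 1)]→ₗ[K] N) :
    ∃ (f : V →ₗ[K] (Fin (finrank K V - finrank K (ker μ.curryLeft)) → K))
      (ν : (Fin (finrank K V - finrank K (ker μ.curryLeft)) → K) [⋀^Fin (n + 1)]→ₗ[K] N),
      μ = ν.compLinearMap f := by
  obtain ⟨C, hC⟩ := Submodule.exists_isCompl (ker μ.curryLeft)
  replace hC := hC.symm
  have hdim : finrank K C = finrank K V - finrank K (ker μ.curryLeft) := by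
    have := Submodule.finrank_add_eq_of_isCompl hC
    omega
  let e : C ≃ₗ[K] (Fin (finrank K V - finrank K (ker μ.curryLeft)) → K) :=
    LinearEquiv.ofFinrankEq _ _ (by rw [finrank_fin_fun, hdim])
  refine ⟨e ∘ₗ C.projectionOnto _ hC, (μ.compLinearMap C.subtype).compLinearMap e.symm, ?_⟩
  rw [compLinearMap_assoc, ← LinearMap.comp_assoc, e.symm_comp, LinearMap.id_comp,
    compLinearMap_subtype_projectionOnto_ker_curryLeft]

end Field

end AlternatingMap

theorem stmt14_general (V : Type*) [AddCommGroup V] [Module ℝ V] [FiniteDimensional ℝ V]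
    (q : ℕ)
    (μ : V [⋀^Fin (q + 1)]→ₗ[ℝ] ℝ) (r : ℕ)
    (hr : IsLeast {k : ℕ | ∃ (f : V →ₗ[ℝ] (Fin k → ℝ))
        (ν : (Fin k → ℝ) [⋀^Fin (q + 1)]→ₗ[ℝ] ℝ), μ = ν.compLinearMap f} r) :
    Module.finrank ℝ (LinearMap.ker μ.curryLeft) = Module.finrank ℝ V - r := by
  have hle : finrank ℝ V - finrank ℝ (ker μ.curryLeft) ≤ r := by
    obtain ⟨f, ν, rfl⟩ := hr.1
    simpa using ν.finrank_sub_finrank_ker_curryLeft_le f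
  have hge := hr.2 μ.exists_eq_compLinearMap_fin_finrank_sub_finrank_ker
  have := Submodule.finrank_le (ker μ.curryLeft)
  omega

/-- For a nonzero exterior `p`-form `μ` (`1 ≤ p ≤ n`, here `p = q + 1`) on an
`n`-dimensional real vector space `V`, with `r` the rank of `μ` (the least dimension of a
vector space `W` such that `μ` is the pullback of a `p`-form on `W` under some linear map
`V → W`) and `Z = {v : μ(v, ·, …, ·) = 0}` the kernel of `μ`, one has `dim Z = n - r`. -/
theorem stmt14 (V : Type*) [AddCommGroup V] [Module ℝ V] [FiniteDimensional ℝ V]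
    (q : ℕ) (hpn : q + 1 ≤ Module.finrank ℝ V)
    (μ : V [⋀^Fin (q + 1)]→ₗ[ℝ] ℝ) (hμ0 : μ ≠ 0) (r : ℕ)
    (hr : IsLeast {k : ℕ | ∃ (f : V →ₗ[ℝ] (Fin k → ℝ))
        (ν : (Fin k → ℝ) [⋀^Fin (q + 1)]→ₗ[ℝ] ℝ), μ = ν.compLinearMap f} r) :
    Module.finrank ℝ (LinearMap.ker μ.curryLeft) = Module.finrank ℝ V - r :=
  stmt14_general V q μ r hr
end

section
/- Let V be a six-dimensional real vector space with basis e₁, …, e₆, let ξ¹, …, ξ⁶ be the dual basis of V*, and let μ = ξ¹ ∧ ξ² ∧ ξ³ + ξ³ ∧ ξ⁴ ∧ ξ⁵ + ξ⁵ ∧ ξ⁶ ∧ ξ¹ + ξ² ∧ ξ⁴ ∧ ξ⁶. Let J₀ : V → V be the linear map determined by J₀e₄ = e₁, J₀e₁ = −e₄, J₀e₆ = e₃, J₀e₃ = −e₆, J₀e₂ = e₅, J₀e₅ = −e₂. Then J₀ and −J₀ are the only linear maps J : V → V with J∘J = −id_V satisfying μ(Ju, Jv, w) = −μ(u, v, w)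 for all u, v, w ∈ V. -/
theorem wedgeFam_three_apply {V : Type*} [AddCommGroup V] [Module ℝ V]
    (f g h : Module.Dual ℝ V) (x y z : V) :
    wedgeFam ![f, g, h] ![x, y, z] =
      f x * g y * h z - f x * g z * h y - f y * g x * h z
        + f y * g z * h x + f z * g x * h y - f z * g y * h x := by
  change Matrix.det (Matrix.of fun i j => ![f, g, h] j (![x, y, z] i)) = _
  rw [Matrix.det_fin_three]
  simp
  ring

namespace AlternatingMap

variable {R M N : Type*} [CommRing R] [AddCommGroup M] [Module R M] [AddCommGroup N] [Module R N]
  (f : M [⋀^Fin 3]→ₗ[R] N)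

theorem map_vecCons_neg_middle (u v w : M) : f ![u, -v, w] = -f ![u, v, w] := by
  have : ![u, -v, w] = Function.update ![u, v, w] 1 (-v) := by
    ext i; fin_cases i <;> rfl
  rw [this, f.map_update_neg]
  congr 2
  ext i; fin_cases i <;> rfl

theorem antiInvariant_iff_map_comm {J : M →ₗ[R] M} (hJ : J ∘ₗ J = -LinearMap.id) :
    (∀ u v w, f ![J u, J v, w] = -f ![u, v, w]) ↔ ∀ u v w, f ![J u, v, w] = f ![u, J v, w] := by
  have hJJ (v : M) : J (J v) = -v := LinearMap.congr_fun hJ v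
  constructor
  · intro h u v w
    simpa [hJJ, f.map_vecCons_neg_middle] using h u (J v) w
  · intro h u v w
    rw [h, hJJ, f.map_vecCons_neg_middle]

end AlternatingMap

namespace LinearMap

variable {V : Type*} [AddCommGroup V] [Module ℝ V] [Nontrivial V] {K : V →ₗ[ℝ] V}

theorem eq_zero_of_smul_id_add_smul_eq_zero (hK : K ∘ₗ K = -id) {s t : ℝ}
    (h : s • id + t • K = 0) : s = 0 ∧ t = 0 := by
  obtain ⟨v, hv⟩ := exists_ne (0 : V)
  have h₁ : s • v + t • K v = 0 := by simpa using LinearMap.congr_fun h v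
  have h₂ : s • K v - t • v = 0 := by
    simpa [← comp_apply, hK, sub_eq_add_neg] using congrArg K h₁
  have hsum : (s ^ 2 + t ^ 2) • v = 0 := by
    linear_combination (norm := module) s • h₁ - t • h₂
  have : s ^ 2 + t ^ 2 = 0 := (smul_eq_zero.mp hsum).resolve_right hv
  constructor <;> nlinarith [sq_nonneg s, sq_nonneg t]

theorem smul_id_add_smul_comp_self_eq_neg_id_iff (hK : K ∘ₗ K = -id) (α β : ℝ) :
    (α • id + β • K) ∘ₗ (α • id + β • K) = -id ↔ α = 0 ∧ (β = 1 ∨ β = -1) := by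
  have hKK (v : V) : K (K v) = -v := LinearMap.congr_fun hK v
  have expand : (α • id + β • K) ∘ₗ (α • id + β • K) =
      (α ^ 2 - β ^ 2) • id + (2 * α * β) • K := by
    ext v; simp [hKK]; module
  rw [expand]
  constructor
  · intro h
    obtain ⟨h₁, h₂⟩ := eq_zero_of_smul_id_add_smul_eq_zero hK
      (s := α ^ 2 - β ^ 2 + 1) (t := 2 * α * β) (by linear_combination (norm := module) h)
    have hα : α = 0 := by
      rcases mul_eq_zero.mp h₂ with h | h
      · simpa using h
      · nlinarith [sq_nonneg α]
    subst hα
    exact ⟨rfl, mul_self_eq_one_iff.mp (by linear_combination -h₁)⟩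
  · rintro ⟨rfl, rfl | rfl⟩ <;> module

end LinearMap

section

variable {V : Type*} [AddCommGroup V] [Module ℝ V] (e : Module.Basis (Fin 6) ℝ V)

noncomputable def threeForm : V [⋀^Fin 3]→ₗ[ℝ] ℝ :=
  wedgeFam ![e.dualBasis 0, e.dualBasis 1, e.dualBasis 2]
    + wedgeFam ![e.dualBasis 2, e.dualBasis 3, e.dualBasis 4]
    + wedgeFam ![e.dualBasis 4, e.dualBasis 5, e.dualBasis 0]
    + wedgeFam ![e.dualBasis 1, e.dualBasis 3, e.dualBasis 5]

noncomputable def J₀ : V →ₗ[ℝ] V := e.constr ℝ ![-(e 3), e 4, -(e 5), e 0, -(e 1), e 2]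

theorem J₀_apply (u : V) :
    J₀ e u = e.repr u 3 • e 0 - e.repr u 4 • e 1 + e.repr u 5 • e 2
      - e.repr u 0 • e 3 + e.repr u 1 • e 4 - e.repr u 2 • e 5 := by
  conv_lhs => rw [← e.sum_repr u]
  simp [J₀, Fin.sum_univ_six]
  module

theorem J₀_comp_self : J₀ e ∘ₗ J₀ e = -LinearMap.id :=
  e.ext fun i => by fin_cases i <;> simp [J₀_apply]

set_option maxHeartbeats 400000 in
/-- On the triples `(e 0, e b, e c)` and `(e 1, e b, e c)` the hypothesis is a linear system in the
matrix entries of `J`, and it already pins them down. -/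
theorem eq_smul_id_add_smul_J₀_of_threeForm_comm {J : V →ₗ[ℝ] V}
    (h : ∀ u v w, threeForm e ![J u, v, w] = threeForm e ![u, J v, w]) :
    J = e.repr (J (e 0)) 0 • LinearMap.id + e.repr (J (e 3)) 0 • J₀ e := by
  have E₀ (b c : Fin 6) := h (e 0) (e b) (e c)
  have E₁ (b c : Fin 6) := h (e 1) (e b) (e c)
  simp [Fin.forall_fin_succ, threeForm, wedgeFam_three_apply] at E₀ E₁
  casesm* _ ∧ _
  refine e.ext fun i => e.repr.injective (Finsupp.ext fun l => ?_)
  fin_cases i <;> fin_cases l <;> simp [J₀] <;> linarith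

theorem threeForm_comm_iff_exists_smul_id_add_smul_J₀ (J : V →ₗ[ℝ] V) :
    (∀ u v w, threeForm e ![J u, v, w] = threeForm e ![u, J v, w]) ↔
      ∃ α β : ℝ, J = α • LinearMap.id + β • J₀ e := by
  refine ⟨fun h => ⟨_, _, eq_smul_id_add_smul_J₀_of_threeForm_comm e h⟩, ?_⟩
  rintro ⟨α, β, rfl⟩ u v w
  simp [threeForm, wedgeFam_three_apply, J₀_apply]
  ring

end

theorem stmt19_general (V : Type*) [AddCommGroup V] [Module ℝ V]
    (e : Module.Basis (Fin 6) ℝ V) :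
    ∀ J : V →ₗ[ℝ] V,
      (J ∘ₗ J = -LinearMap.id ∧
        ∀ u v w : V,
          (wedgeFam ![e.dualBasis 0, e.dualBasis 1, e.dualBasis 2]
            + wedgeFam ![e.dualBasis 2, e.dualBasis 3, e.dualBasis 4]
            + wedgeFam ![e.dualBasis 4, e.dualBasis 5, e.dualBasis 0]
            + wedgeFam ![e.dualBasis 1, e.dualBasis 3, e.dualBasis 5]) ![J u, J v, w]
          = -((wedgeFam ![e.dualBasis 0, e.dualBasis 1, e.dualBasis 2]
            + wedgeFam ![e.dualBasis 2, e.dualBasis 3, e.dualBasis 4]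
            + wedgeFam ![e.dualBasis 4, e.dualBasis 5, e.dualBasis 0]
            + wedgeFam ![e.dualBasis 1, e.dualBasis 3, e.dualBasis 5]) ![u, v, w]))
      ↔ (J = e.constr ℝ ![-(e 3), e 4, -(e 5), e 0, -(e 1), e 2]
          ∨ J = -(e.constr ℝ ![-(e 3), e 4, -(e 5), e 0, -(e 1), e 2])) := by
  intro J
  have : Nontrivial V := nontrivial_of_ne (e 0) 0 (e.ne_zero 0)
  change (J ∘ₗ J = -LinearMap.id ∧ ∀ u v w, threeForm e ![J u, J v, w] = -threeForm e ![u, v, w])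
    ↔ (J = J₀ e ∨ J = -J₀ e)
  constructor
  · rintro ⟨hJ, hanti⟩
    rw [(threeForm e).antiInvariant_iff_map_comm hJ,
      threeForm_comm_iff_exists_smul_id_add_smul_J₀] at hanti
    obtain ⟨α, β, rfl⟩ := hanti
    obtain ⟨rfl, rfl | rfl⟩ :=
      (LinearMap.smul_id_add_smul_comp_self_eq_neg_id_iff (J₀_comp_self e) α β).mp hJ
    · exact Or.inl (by simp)
    · exact Or.inr (by simp)
  · intro hJ₀
    have hJ : J ∘ₗ J = -LinearMap.id := by
      rcases hJ₀ with rfl | rfl <;> simp [J₀_comp_self]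
    refine ⟨hJ, ?_⟩
    rw [(threeForm e).antiInvariant_iff_map_comm hJ, threeForm_comm_iff_exists_smul_id_add_smul_J₀]
    rcases hJ₀ with rfl | rfl
    · exact ⟨0, 1, by simp⟩
    · exact ⟨0, -1, by simp⟩

/-- Let `V` be six-dimensional with basis `e₁, …, e₆`, dual basis
`ξ¹, …, ξ⁶`, and `μ = ξ¹∧ξ²∧ξ³ + ξ³∧ξ⁴∧ξ⁵ + ξ⁵∧ξ⁶∧ξ¹ + ξ²∧ξ⁴∧ξ⁶` (0-based indices
below). Let `J₀` be determined by `J₀e₄ = e₁, J₀e₁ = -e₄, J₀e₆ = e₃, J₀e₃ = -e₆,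
J₀e₂ = e₅, J₀e₅ = -e₂`. Then `J₀` and `-J₀` are the only linear maps `J` with
`J∘J = -id` and `μ(Ju, Jv, w) = -μ(u, v, w)` for all `u, v, w`. -/
theorem stmt19 (V : Type*) [AddCommGroup V] [Module ℝ V] [FiniteDimensional ℝ V]
    (hdim : Module.finrank ℝ V = 6) (e : Module.Basis (Fin 6) ℝ V) :
    ∀ J : V →ₗ[ℝ] V,
      (J ∘ₗ J = -LinearMap.id ∧
        ∀ u v w : V,
          (wedgeFam ![e.dualBasis 0, e.dualBasis 1, e.dualBasis 2]
            + wedgeFam ![e.dualBasis 2, e.dualBasis 3, e.dualBasis 4]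
            + wedgeFam ![e.dualBasis 4, e.dualBasis 5, e.dualBasis 0]
            + wedgeFam ![e.dualBasis 1, e.dualBasis 3, e.dualBasis 5]) ![J u, J v, w]
          = -((wedgeFam ![e.dualBasis 0, e.dualBasis 1, e.dualBasis 2]
            + wedgeFam ![e.dualBasis 2, e.dualBasis 3, e.dualBasis 4]
            + wedgeFam ![e.dualBasis 4, e.dualBasis 5, e.dualBasis 0]
            + wedgeFam ![e.dualBasis 1, e.dualBasis 3, e.dualBasis 5]) ![u, v, w]))
      ↔ (J = e.constr ℝ ![-(e 3), e 4, -(e 5), e 0, -(e 1), e 2]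
          ∨ J = -(e.constr ℝ ![-(e 3), e 4, -(e 5), e 0, -(e 1), e 2])) :=
  stmt19_general V e
end
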